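/- arXiv:2310.02394 — 2 statements merged into one kernel-verified Lean document; each statement's English description precedes it below -/
import Mathlib

section
/- Let W and U be N×N row-stochastic matrices with B = W - U, and let α ∈ (0,1). Define the influence vectors v_W = (α/N)(I-(1-α)W')⁻¹𝟏 and v_U = (α/N)(I-(1-α)U')⁻¹𝟏. Then ‖v_U - v_W‖₁ ≤ (1-α)‖B‖_∞/α, where ‖B‖_∞ is the maximum absolute row sum of B. -/
/-!
Write `M_A = 1 - (1 - α) Aᵀ`. A row-stochastic `A` makes `Aᵀ` a contraction for the `ℓ¹` norm, so
`‖M_A x‖₁ ≥ α ‖x‖₁`: hence `M_A` is invertible with `‖M_A⁻¹‖₁ ≤ 1 / α`. The resolvent identity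
`M_U⁻¹ - M_W⁻¹ = (1 - α) M_U⁻¹ (U - W)ᵀ M_W⁻¹`, together with `‖(U - W)ᵀ‖₁ = ‖W - U‖_∞` and
`‖𝟏‖₁ = N`, gives `‖M_U⁻¹ 𝟏 - M_W⁻¹ 𝟏‖₁ ≤ (1 - α) ‖W - U‖_∞ N / α²`; the factor `α / N` in the
influence vectors turns this into the claim.
-/

open Matrix BigOperators

/-- The influence vector of an input-output matrix `W` with labor share `α`. -/
noncomputable def influence {N : ℕ} (α : ℝ) (W : Matrix (Fin N) (Fin N) ℝ) : Fin N → ℝ :=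
  (α / (N : ℝ)) • ((1 - (1 - α) • Wᵀ)⁻¹ *ᵥ fun _ => 1)

namespace Matrix

variable {m n : Type*} [Fintype m] [Fintype n]

theorem sum_abs_transpose_mulVec_le {A : Matrix m n ℝ} {K : ℝ} (hA : ∀ i, ∑ j, |A i j| ≤ K)
    (x : m → ℝ) : ∑ j, |(Aᵀ *ᵥ x) j| ≤ K * ∑ i, |x i| :=
  calc ∑ j, |(Aᵀ *ᵥ x) j| ≤ ∑ j, ∑ i, |A i j| * |x i| := by
        refine Finset.sum_le_sum fun j _ => (Finset.abs_sum_le_sum_abs _ _).trans_eq ?_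
        simp only [transpose_apply, abs_mul]
    _ = ∑ i, (∑ j, |A i j|) * |x i| := by
        rw [Finset.sum_comm]
        simp only [Finset.sum_mul]
    _ ≤ ∑ i, K * |x i| := Finset.sum_le_sum fun i _ => by gcongr; exact hA i
    _ = K * ∑ i, |x i| := Finset.mul_sum _ _ _ |>.symm

variable [DecidableEq n]

theorem sum_abs_eq_one_of_mem_rowStochastic {A : Matrix n n ℝ} (hA : A ∈ rowStochastic ℝ n)
    (i : n) : ∑ j, |A i j| = 1 := by
  simp only [abs_of_nonneg (nonneg_of_mem_rowStochastic hA), sum_row_of_mem_rowStochastic hA i]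

section Resolvent

variable {A : Matrix n n ℝ} (hA : ∀ i, ∑ j, |A i j| ≤ 1) {c : ℝ}
include hA

theorem mul_sum_abs_le_sum_abs_one_sub_smul_transpose_mulVec (hc : 0 ≤ c) (x : n → ℝ) :
    (1 - c) * ∑ i, |x i| ≤ ∑ i, |((1 - c • Aᵀ) *ᵥ x) i| := by
  have hx : x = (1 - c • Aᵀ) *ᵥ x + c • (Aᵀ *ᵥ x) := by
    rw [sub_mulVec, smul_mulVec, one_mulVec, sub_add_cancel]
  have hcontract := sum_abs_transpose_mulVec_le hA x
  have htriangle : ∑ i, |x i| ≤ ∑ i, |((1 - c • Aᵀ) *ᵥ x) i| + c * ∑ i, |(Aᵀ *ᵥ x) i| := by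
    conv_lhs => rw [hx]
    rw [Finset.mul_sum, ← Finset.sum_add_distrib]
    refine Finset.sum_le_sum fun i _ => (abs_add_le _ _).trans_eq ?_
    rw [Pi.smul_apply, smul_eq_mul, abs_mul, abs_of_nonneg hc]
  nlinarith

theorem isUnit_one_sub_smul_transpose (hc0 : 0 ≤ c) (hc1 : c < 1) : IsUnit (1 - c • Aᵀ) := by
  refine mulVec_injective_iff_isUnit.1 fun x y hxy => ?_
  have hbound := mul_sum_abs_le_sum_abs_one_sub_smul_transpose_mulVec hA hc0 (x - y)
  rw [mulVec_sub, hxy, sub_self] at hbound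
  simp only [Pi.zero_apply, abs_zero, Finset.sum_const_zero] at hbound
  have hsum : ∑ i, |(x - y) i| = 0 :=
    le_antisymm (nonpos_of_mul_nonpos_right hbound (by linarith))
      (Finset.sum_nonneg fun i _ => abs_nonneg _)
  funext i
  simpa [sub_eq_zero] using
    (Finset.sum_eq_zero_iff_of_nonneg (fun i _ => abs_nonneg _)).1 hsum i (Finset.mem_univ i)

theorem mul_sum_abs_inv_mulVec_le (hc0 : 0 ≤ c) (hc1 : c < 1) (y : n → ℝ) :
    (1 - c) * ∑ i, |((1 - c • Aᵀ)⁻¹ *ᵥ y) i| ≤ ∑ i, |y i| := by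
  have hunit := (isUnit_iff_isUnit_det _).1 (isUnit_one_sub_smul_transpose hA hc0 hc1)
  have hbound :=
    mul_sum_abs_le_sum_abs_one_sub_smul_transpose_mulVec hA hc0 ((1 - c • Aᵀ)⁻¹ *ᵥ y)
  rwa [mulVec_mulVec, mul_nonsing_inv _ hunit, one_mulVec] at hbound

end Resolvent

theorem inv_mulVec_sub_inv_mulVec_eq {A B : Matrix n n ℝ} (hA : ∀ i, ∑ j, |A i j| ≤ 1)
    (hB : ∀ i, ∑ j, |B i j| ≤ 1) {c : ℝ} (hc0 : 0 ≤ c) (hc1 : c < 1) (y : n → ℝ) :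
    (1 - c • Bᵀ)⁻¹ *ᵥ y - (1 - c • Aᵀ)⁻¹ *ᵥ y =
      (1 - c • Bᵀ)⁻¹ *ᵥ (c • ((B - A)ᵀ *ᵥ (1 - c • Aᵀ)⁻¹ *ᵥ y)) := by
  have hunits : IsUnit (1 - c • Bᵀ) ↔ IsUnit (1 - c • Aᵀ) :=
    iff_of_true (isUnit_one_sub_smul_transpose hB hc0 hc1)
      (isUnit_one_sub_smul_transpose hA hc0 hc1)
  have hdiff : (1 - c • Aᵀ) - (1 - c • Bᵀ) = c • (B - A)ᵀ := by
    rw [transpose_sub, smul_sub]; abel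
  rw [← sub_mulVec, inv_sub_inv hunits, hdiff, ← mulVec_mulVec, ← mulVec_mulVec, smul_mulVec]

theorem sq_mul_sum_abs_inv_mulVec_sub_le [Nonempty n] {A B : Matrix n n ℝ}
    (hA : ∀ i, ∑ j, |A i j| ≤ 1) (hB : ∀ i, ∑ j, |B i j| ≤ 1) {c K : ℝ} (hc0 : 0 ≤ c)
    (hc1 : c < 1) (hK : ∀ i, ∑ j, |(A - B) i j| ≤ K) (y : n → ℝ) :
    (1 - c) ^ 2 * ∑ i, |((1 - c • Bᵀ)⁻¹ *ᵥ y - (1 - c • Aᵀ)⁻¹ *ᵥ y : n → ℝ) i| ≤ c * K * ∑ i, |y i| := by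
  set x := (1 - c • Aᵀ)⁻¹ *ᵥ y
  have hK' : ∀ i, ∑ j, |(B - A) i j| ≤ K := fun i => by
    simpa only [sub_apply, abs_sub_comm] using hK i
  have hK0 : 0 ≤ K := (Finset.sum_nonneg fun j _ => abs_nonneg _).trans (hK (Classical.arbitrary n))
  have hperturb : (1 - c) * ∑ i, |((1 - c • Bᵀ)⁻¹ *ᵥ y - x : n → ℝ) i| ≤ c * (K * ∑ i, |x i|) := by
    rw [inv_mulVec_sub_inv_mulVec_eq hA hB hc0 hc1]
    refine (mul_sum_abs_inv_mulVec_le hB hc0 hc1 _).trans ?_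
    simp only [Pi.smul_apply, smul_eq_mul, abs_mul, abs_of_nonneg hc0, ← Finset.mul_sum]
    exact mul_le_mul_of_nonneg_left (sum_abs_transpose_mulVec_le hK' x) hc0
  have hx := mul_sum_abs_inv_mulVec_le hA hc0 hc1 y
  calc (1 - c) ^ 2 * ∑ i, |((1 - c • Bᵀ)⁻¹ *ᵥ y - x : n → ℝ) i|
      ≤ (1 - c) * (c * (K * ∑ i, |x i|)) := by
        rw [sq, mul_assoc]; exact mul_le_mul_of_nonneg_left hperturb (by linarith)
    _ = c * K * ((1 - c) * ∑ i, |x i|) := by ring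
    _ ≤ c * K * ∑ i, |y i| := mul_le_mul_of_nonneg_left hx (mul_nonneg hc0 hK0)

end Matrix

/-- Ipsen–Wills perturbation bound: `‖v_U - v_W‖₁ ≤ (1-α)‖B‖_∞ / α` where
`B = W - U` and `‖B‖_∞` is the maximum absolute row sum of `B`. -/
theorem influence_perturbation_bound (N : ℕ) [NeZero N] (α : ℝ) (hα0 : 0 < α) (hα1 : α < 1)
    (W U : Matrix (Fin N) (Fin N) ℝ)
    (hWnn : ∀ i j, 0 ≤ W i j) (hWrow : ∀ i, ∑ j, W i j = 1)
    (hUnn : ∀ i j, 0 ≤ U i j) (hUrow : ∀ i, ∑ j, U i j = 1) :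
    ∑ i, |influence α U i - influence α W i| ≤
      (1 - α) * (Finset.univ.sup' Finset.univ_nonempty fun i => ∑ j, |(W - U) i j|) / α := by
  set K := Finset.univ.sup' Finset.univ_nonempty fun i => ∑ j, |(W - U) i j|
  have hK : ∀ i, ∑ j, |(W - U) i j| ≤ K := fun i =>
    Finset.le_sup' (fun i => ∑ j, |(W - U) i j|) (Finset.mem_univ i)
  have hW := sum_abs_eq_one_of_mem_rowStochastic (mem_rowStochastic_iff_sum.2 ⟨hWnn, hWrow⟩)
  have hU := sum_abs_eq_one_of_mem_rowStochastic (mem_rowStochastic_iff_sum.2 ⟨hUnn, hUrow⟩)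
  have hbound := sq_mul_sum_abs_inv_mulVec_sub_le (hW · |>.le) (hU · |>.le)
    (by linarith : 0 ≤ 1 - α) (by linarith) hK fun _ => 1
  have hN : (0 : ℝ) < N := Nat.cast_pos.2 (NeZero.pos N)
  simp only [sub_sub_cancel, abs_one, Finset.sum_const, Finset.card_univ, Fintype.card_fin,
    nsmul_eq_mul, mul_one] at hbound
  have hinfluence : ∑ i, |influence α U i - influence α W i| =
      α / N * ∑ i, |((1 - (1 - α) • Uᵀ)⁻¹ *ᵥ (fun _ => 1) - (1 - (1 - α) • Wᵀ)⁻¹ *ᵥ fun _ => 1 :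
        Fin N → ℝ) i| := by
    simp only [influence, Pi.smul_apply, Pi.sub_apply, smul_eq_mul, ← mul_sub, abs_mul,
      abs_of_pos (div_pos hα0 hN), Finset.mul_sum]
  rw [hinfluence, le_div_iff₀ hα0, div_mul_eq_mul_div, div_mul_eq_mul_div, div_le_iff₀ hN]
  nlinarith
end

section
/- Suppose W and U are n×n row-stochastic matrices such that for each i there exist d_i ≤ δ and nonnegative numbers c_{ij} ≤ w_{ij} with ∑_j c_{ij} = d_i and u_{ij} = (w_{ij} - c_{ij})/(1 - d_i). Then every row of B = W - U satisfies ∑_j |u_{ij} - w_{ij}| ≤ (2δ - δ²)/(1-δ), i.e., ‖B‖_∞ ≤ (2δ - δ²)/(1-δ). -/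
/-!
Row by row, `u - w = (d w - c)/(1 - d)`, and `c ≤ w` confines `d w - c` to
`[-(1 - d) c, d w]`, so `|u - w| ≤ (d w + (1 - d) c)/(1 - d)`. Summing over the row with
`∑ w = 1` and `∑ c = d` gives `(2d - d²)/(1 - d) = 1/(1 - d) - (1 - d)`, which is increasing
in `d < 1`.
-/

open Matrix BigOperators

lemma abs_mul_sub_le {w c d : ℝ} (hc0 : 0 ≤ c) (hcw : c ≤ w) (hd0 : 0 ≤ d) (hd1 : d ≤ 1) :
    |d * w - c| ≤ d * w + (1 - d) * c := by
  rw [abs_le]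
  constructor <;> nlinarith [mul_le_mul_of_nonneg_left hcw hd0, mul_nonneg hd0 hc0]

lemma two_mul_sub_sq_div_one_sub_le {d δ : ℝ} (hd : d ≤ δ) (hδ : δ < 1) :
    (2 * d - d ^ 2) / (1 - d) ≤ (2 * δ - δ ^ 2) / (1 - δ) := by
  have key : ∀ x : ℝ, x < 1 → (2 * x - x ^ 2) / (1 - x) = (1 - x)⁻¹ - (1 - x) := fun x hx => by
    field_simp [(sub_pos.2 hx).ne']
    ring
  rw [key d (hd.trans_lt hδ), key δ hδ]
  have : 0 < 1 - δ := sub_pos.2 hδ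
  gcongr

lemma sum_abs_renormalize_sub_le {ι : Type*} [Fintype ι] {w c : ι → ℝ} {d : ℝ}
    (hw : ∑ j, w j = 1) (hc0 : ∀ j, 0 ≤ c j) (hcw : ∀ j, c j ≤ w j) (hcd : ∑ j, c j = d)
    (hd1 : d < 1) :
    ∑ j, |(w j - c j) / (1 - d) - w j| ≤ (2 * d - d ^ 2) / (1 - d) := by
  have hpos : 0 < 1 - d := sub_pos.2 hd1
  have hd0 : 0 ≤ d := hcd ▸ Finset.sum_nonneg fun j _ => hc0 j
  calc ∑ j, |(w j - c j) / (1 - d) - w j|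
      = ∑ j, |d * w j - c j| / (1 - d) := by
        refine Finset.sum_congr rfl fun j _ => ?_
        have : (w j - c j) / (1 - d) - w j = (d * w j - c j) / (1 - d) := by
          field_simp
          ring
        rw [this, abs_div, abs_of_pos hpos]
    _ ≤ ∑ j, (d * w j + (1 - d) * c j) / (1 - d) := by
        gcongr with j
        exact abs_mul_sub_le (hc0 j) (hcw j) hd0 hd1.le
    _ = (2 * d - d ^ 2) / (1 - d) := by
        rw [← Finset.sum_div, Finset.sum_add_distrib, ← Finset.mul_sum, ← Finset.mul_sum, hw,
          hcd]
        ring_nf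

theorem row_sum_perturbation_bound_general (n : ℕ) (δ : ℝ) (hδ1 : δ < 1)
    (W U : Matrix (Fin n) (Fin n) ℝ) (c : Fin n → Fin n → ℝ) (d : Fin n → ℝ)
    (hWrow : ∀ i, ∑ j, W i j = 1)
    (hd : ∀ i, d i ≤ δ)
    (hc0 : ∀ i j, 0 ≤ c i j) (hcw : ∀ i j, c i j ≤ W i j)
    (hcd : ∀ i, ∑ j, c i j = d i)
    (hU : ∀ i j, U i j = (W i j - c i j) / (1 - d i)) :
    ∀ i, ∑ j, |U i j - W i j| ≤ (2 * δ - δ ^ 2) / (1 - δ) := by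
  intro i
  simp only [hU]
  exact (sum_abs_renormalize_sub_le (hWrow i) (hc0 i) (hcw i) (hcd i)
    ((hd i).trans_lt hδ1)).trans (two_mul_sub_sq_div_one_sub_le (hd i) hδ1)

/-- If a `d i ≤ δ` share of each row of the row-stochastic matrix `W` is deleted
(`c i j` being the deleted share from column `j`) and the rows are renormalized to
give `U`, then every absolute row sum of `W - U` is at most `(2δ - δ²)/(1-δ)`. -/
theorem row_sum_perturbation_bound (n : ℕ) (δ : ℝ) (hδ0 : 0 ≤ δ) (hδ1 : δ < 1)
    (W U : Matrix (Fin n) (Fin n) ℝ) (c : Fin n → Fin n → ℝ) (d : Fin n → ℝ)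
    (hWnn : ∀ i j, 0 ≤ W i j) (hWrow : ∀ i, ∑ j, W i j = 1)
    (hd : ∀ i, d i ≤ δ)
    (hc0 : ∀ i j, 0 ≤ c i j) (hcw : ∀ i j, c i j ≤ W i j)
    (hcd : ∀ i, ∑ j, c i j = d i)
    (hU : ∀ i j, U i j = (W i j - c i j) / (1 - d i)) :
    ∀ i, ∑ j, |U i j - W i j| ≤ (2 * δ - δ ^ 2) / (1 - δ) :=
  row_sum_perturbation_bound_general n δ hδ1 W U c d hWrow hd hc0 hcw hcd hU
end
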